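/- Let q ≥ 1 be an integer, let γ_{2q} ∈ S_{2q} be the full cycle sending i ↦ i−1 (mod 2q) and γ_q ∈ S_q the full cycle sending i ↦ i−1 (mod q). Given arbitrary permutations α_1, α_2 ∈ S_q, define α̃_1, α̃_2 ∈ S_{2q} by α̃_1(2i−1) = 2α_1(i)−1 and α̃_1(2i) = 2i, respectively α̃_2(2i) = 2α_2(i) and α̃_2(2i−1) = 2i−1, for i = 1,…,q. Then the number of cycles of the permutation γ_{2q}^{−1} ∘ (α̃_1 ∘ α̃_2) equals the number of cycles of α_1 ∘ γ_q^{−1} ∘ α_2. -/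

import Mathlib

/-! The permutation `σ = γ₂q⁻¹ α̃₁ α̃₂` sends each even position `2i` to the odd position
`2α₁(i)+1` and each odd position `2i+1` to the even position `2γ_q⁻¹α₂(i)`. Hence every cycle of
`σ` meets the odd positions, and `σ²` acts on them as `α₁γ_q⁻¹α₂` acts on `Fin q`. The map
`2i ↦ α₁ i, 2i+1 ↦ i`, together with its section `i ↦ 2i+1`, therefore induces a bijection
between the cycles of `σ` and those of `α₁γ_q⁻¹α₂`. -/

noncomputable section

/-- The number of cycles of a permutation (counting fixed points as cycles), i.e. the
number of orbits of the permutation. -/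
def numCycles {α : Type*} (σ : Equiv.Perm α) : ℕ :=
  Nat.card (Quotient (Setoid.mk σ.SameCycle
    ⟨fun _ => Equiv.Perm.SameCycle.refl σ _,
     fun h => h.symm, fun h₁ h₂ => h₁.trans h₂⟩))

namespace Equiv.Perm

variable {α β : Type*}

theorem SameCycle.rel_of_forall_rel_apply {f : Perm α} {r : α → α → Prop} (hr : Equivalence r)
    (h : ∀ x, r x (f x)) {x y : α} (hxy : f.SameCycle x y) : r x y := by
  obtain ⟨n, rfl⟩ := hxy
  induction n using Int.induction_on with
  | zero => exact hr.refl x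
  | succ n ih => rw [add_comm, zpow_add, zpow_one, mul_apply]; exact hr.trans ih (h _)
  | pred n ih =>
    rw [sub_eq_neg_add, zpow_add, zpow_neg_one, mul_apply]
    have h' := h (f⁻¹ ((f ^ (-(n : ℤ))) x))
    simp only [coe_inv, apply_symm_apply] at h' ⊢
    exact hr.trans ih (hr.symm h')

theorem numCycles_eq_of_section {σ : Perm α} {τ : Perm β} (g : α → β) (s : β → α)
    (hgs : ∀ b, g (s b) = b) (hg : ∀ x, τ.SameCycle (g x) (g (σ x)))
    (hs : ∀ b, σ.SameCycle (s b) (s (τ b))) (hsg : ∀ x, σ.SameCycle x (s (g x))) :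
    numCycles σ = numCycles τ := by
  have hg' : ∀ x y, σ.SameCycle x y → τ.SameCycle (g x) (g y) := fun _ _ =>
    SameCycle.rel_of_forall_rel_apply ((SameCycle.equivalence τ).comap g) hg
  have hs' : ∀ a b, τ.SameCycle a b → σ.SameCycle (s a) (s b) := fun _ _ =>
    SameCycle.rel_of_forall_rel_apply ((SameCycle.equivalence σ).comap s) hs
  refine Nat.card_congr
    { toFun := Quotient.map g hg'
      invFun := Quotient.map s hs'
      left_inv := fun c => Quotient.inductionOn c fun x => Quotient.sound (hsg x).symm
      right_inv := fun c => Quotient.inductionOn c fun b => congrArg _ (hgs b) }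

end Equiv.Perm

namespace Fin

variable {q : ℕ}

def twoMul (i : Fin q) : Fin (2 * q) := ⟨2 * i.1, by omega⟩

def twoMulAddOne (i : Fin q) : Fin (2 * q) := ⟨2 * i.1 + 1, by omega⟩

@[elab_as_elim]
theorem twoMul_cases {motive : Fin (2 * q) → Prop} (x : Fin (2 * q))
    (even : ∀ i, motive (twoMul i)) (odd : ∀ i, motive (twoMulAddOne i)) : motive x := by
  obtain ⟨k, hk⟩ := x
  rcases Nat.even_or_odd' k with ⟨i, rfl | rfl⟩
  · exact even ⟨i, by omega⟩
  · exact odd ⟨i, by omega⟩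

theorem twoMul_add_one [NeZero q] (i : Fin q) : twoMul i + 1 = twoMulAddOne i := by
  ext
  rw [val_add, val_one', Nat.add_mod_mod, Nat.mod_eq_of_lt] <;> simp only [twoMul, twoMulAddOne]
  omega

theorem twoMulAddOne_add_one [NeZero q] (i : Fin q) : twoMulAddOne i + 1 = twoMul (i + 1) := by
  ext
  simp only [val_add, val_one', Nat.add_mod_mod, twoMul, twoMulAddOne]
  rw [← Nat.mul_mod_mul_left]
  ring_nf

def collapse (β : Equiv.Perm (Fin q)) (x : Fin (2 * q)) : Fin q :=
  if x.1 % 2 = 0 then β ⟨x.1 / 2, by omega⟩ else ⟨x.1 / 2, by omega⟩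

@[simp]
theorem collapse_twoMul (β : Equiv.Perm (Fin q)) (i : Fin q) : collapse β (twoMul i) = β i := by
  simp only [collapse, twoMul, Nat.mul_mod_right, if_true]
  congr
  omega

@[simp]
theorem collapse_twoMulAddOne (β : Equiv.Perm (Fin q)) (i : Fin q) :
    collapse β (twoMulAddOne i) = i := by
  simp only [collapse, twoMulAddOne, Nat.mul_add_mod_self_left, Nat.one_mod, one_ne_zero,
    if_false]
  ext
  simp only
  omega

end Fin

open Equiv Fin in
theorem numCycles_eq_numCycles_mul_of_interleave {q : ℕ} (σ : Perm (Fin (2 * q)))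
    (β δ : Perm (Fin q)) (hσ₀ : ∀ i, σ (twoMul i) = twoMulAddOne (β i))
    (hσ₁ : ∀ i, σ (twoMulAddOne i) = twoMul (δ i)) :
    numCycles σ = numCycles (β * δ) := by
  refine Perm.numCycles_eq_of_section (collapse β) twoMulAddOne (collapse_twoMulAddOne β)
    (fun x => ?_) (fun i => ?_) (fun x => ?_)
  · induction x using twoMul_cases with
    | even i => rw [hσ₀, collapse_twoMul, collapse_twoMulAddOne]
    | odd i =>
      rw [hσ₁, collapse_twoMul, collapse_twoMulAddOne, ← Perm.mul_apply]
      exact Perm.SameCycle.rfl.apply_right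
  · have : twoMulAddOne ((β * δ) i) = σ (σ (twoMulAddOne i)) := by simp [hσ₀, hσ₁]
    rw [this, Perm.sameCycle_apply_right, Perm.sameCycle_apply_right]
  · induction x using twoMul_cases with
    | even i =>
      rw [collapse_twoMul, ← hσ₀]
      exact Perm.SameCycle.rfl.apply_right
    | odd i => rw [collapse_twoMulAddOne]

/-- Positions are 0-indexed: the paper's odd elements `2i−1` are the positions `2i` here, and its
even elements `2i` the positions `2i+1`. -/
theorem numCycles_interleave (q : ℕ) (hq : 1 ≤ q)
    (γ2q : Equiv.Perm (Fin (2 * q))) (hγ2q : ∀ i, γ2q i = i - ⟨1 % (2 * q), Nat.mod_lt _ (by omega)⟩)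
    (γq : Equiv.Perm (Fin q)) (hγq : ∀ i, γq i = i - ⟨1 % q, Nat.mod_lt _ (by omega)⟩)
    (α₁ α₂ : Equiv.Perm (Fin q)) (tα₁ tα₂ : Equiv.Perm (Fin (2 * q)))
    (htα₁odd : ∀ i : Fin q,
      tα₁ ⟨2 * i.1, by have := i.2; omega⟩ = ⟨2 * (α₁ i).1, by have := (α₁ i).2; omega⟩)
    (htα₁even : ∀ i : Fin q,
      tα₁ ⟨2 * i.1 + 1, by have := i.2; omega⟩ = ⟨2 * i.1 + 1, by have := i.2; omega⟩)
    (htα₂odd : ∀ i : Fin q,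
      tα₂ ⟨2 * i.1, by have := i.2; omega⟩ = ⟨2 * i.1, by have := i.2; omega⟩)
    (htα₂even : ∀ i : Fin q,
      tα₂ ⟨2 * i.1 + 1, by have := i.2; omega⟩ =
        ⟨2 * (α₂ i).1 + 1, by have := (α₂ i).2; omega⟩) :
    numCycles (γ2q⁻¹ * (tα₁ * tα₂)) = numCycles (α₁ * γq⁻¹ * α₂) := by
  have : NeZero q := ⟨by omega⟩
  obtain rfl : γ2q = Equiv.subRight 1 := Equiv.ext hγ2q
  obtain rfl : γq = Equiv.subRight 1 := Equiv.ext hγq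
  rw [mul_assoc]
  refine numCycles_eq_numCycles_mul_of_interleave _ _ _ (fun i => ?_) (fun i => ?_)
  · have h₂ : tα₂ (Fin.twoMul i) = Fin.twoMul i := htα₂odd i
    have h₁ : tα₁ (Fin.twoMul i) = Fin.twoMul (α₁ i) := htα₁odd i
    simp [h₁, h₂, Fin.twoMul_add_one]
  · have h₂ : tα₂ (Fin.twoMulAddOne i) = Fin.twoMulAddOne (α₂ i) := htα₂even i
    have h₁ : tα₁ (Fin.twoMulAddOne (α₂ i)) = Fin.twoMulAddOne (α₂ i) := htα₁even (α₂ i)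
    simp [h₁, h₂, Fin.twoMulAddOne_add_one]

end
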